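/- arXiv:1210.0251 — 5 statements merged into one kernel-verified Lean document; each statement's English description precedes it below -/
import Mathlib

section
/- If F : ℝⁿ → ℝⁿ is an open continuous map, then the function m sending x to the cardinality of the fiber F⁻¹(F x) (valued in ℕ∞) is lower semicontinuous: for every x there is a neighborhood U of x such that m(x') ≥ m(x) for all x' ∈ U, provided m(x) is finite. -/
theorem fiber_card_lower_semicontinuous {n : ℕ}
    (F : (Fin n → ℝ) → (Fin n → ℝ)) (hc : Continuous F) (ho : IsOpenMap F)
    (x : Fin n → ℝ) (hfin : (F ⁻¹' {F x}).Finite) :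
    ∃ U ∈ nhds x, ∀ x' ∈ U, (F ⁻¹' {F x}).encard ≤ (F ⁻¹' {F x'}).encard := by
  set S : Set (Fin n → ℝ) := F ⁻¹' {F x} with hS
  obtain ⟨V, hV, hdisj⟩ := hfin.t2_separation
  set W : Set (Fin n → ℝ) := ⋂ y ∈ S, F '' (V y) with hW
  have hWopen : IsOpen W := by
    apply hfin.isOpen_biInter
    intro y _
    exact ho _ (hV y).2
  have hxW : F x ∈ W := by
    refine Set.mem_iInter₂.2 fun y hy => ⟨y, (hV y).1, hy⟩
  refine ⟨F ⁻¹' W, ?_, ?_⟩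
  · exact (hWopen.preimage hc).mem_nhds hxW
  · intro x' hx'
    have hchoice : ∀ y ∈ S, ∃ z, z ∈ V y ∧ F z = F x' := by
      intro y hy
      have := Set.mem_iInter₂.1 hx' y hy
      obtain ⟨z, hz, hFz⟩ := this
      exact ⟨z, hz, hFz⟩
    choose g hg1 hg2 using hchoice
    have hmaps : ∀ y (hy : y ∈ S), g y hy ∈ F ⁻¹' {F x'} := fun y hy => hg2 y hy
    -- build a function on all of the type to use InjOn lemma
    classical
    set g' : (Fin n → ℝ) → (Fin n → ℝ) := fun y => if h : y ∈ S then g y h else x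
    refine Set.encard_le_encard_of_injOn (f := g') ?_ ?_
    · intro y hy
      simp only [g', dif_pos hy]
      exact hg2 y hy
    · intro y₁ h₁ y₂ h₂ heq
      simp only [g', dif_pos h₁, dif_pos h₂] at heq
      by_contra hne
      have := (hdisj h₁ h₂ hne).ne_of_mem (hg1 y₁ h₁) (heq ▸ hg1 y₂ h₂)
      exact this rfl
end

section
/- A nonsingular everywhere-defined rational map f : ℝ → ℝ (i.e., f = p/q with q vanishing nowhere and f' vanishing nowhere) is a bijection of ℝ onto ℝ. -/
open Polynomial Filter Topology

private lemma comp_negX_ne_zero {r : Polynomial ℝ} (hr : r ≠ 0) : r.comp (-X) ≠ 0 := by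
  intro h
  apply hr
  have : (r.comp (-X)).comp (-X) = r := by
    rw [comp_assoc]
    simp
  rw [h] at this
  simpa using this.symm

private lemma degree_comp_negX (r : Polynomial ℝ) : (r.comp (-X)).degree = r.degree := by
  by_cases hr : r = 0
  · simp [hr]
  have h1 : (r.comp (-X)).natDegree = r.natDegree := by
    rw [natDegree_comp]
    simp
  rw [degree_eq_natDegree (comp_negX_ne_zero hr), degree_eq_natDegree hr, h1]

private lemma leadingCoeff_comp_negX (r : Polynomial ℝ) :
    (r.comp (-X)).leadingCoeff = r.leadingCoeff * (-1) ^ r.natDegree := by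
  rw [leadingCoeff_comp (by simp : (-X : Polynomial ℝ).natDegree ≠ 0)]
  simp

/-- helper: convert tendsto along atTop of `f ∘ neg` to tendsto along atBot of `f`. -/
private lemma tendsto_atBot_of_neg {f : ℝ → ℝ} {l : Filter ℝ}
    (h : Tendsto (fun x => f (-x)) atTop l) : Tendsto f atBot l := by
  have := h.comp tendsto_neg_atBot_atTop
  simpa [Function.comp_def] using this

private lemma aux_tendsto (p q : Polynomial ℝ) (hq : ∀ x : ℝ, q.eval x ≠ 0) (f : ℝ → ℝ)
    (hf : ∀ x, f x = p.eval x / q.eval x) (hmono : StrictMono f) :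
    Tendsto f atTop atTop ∧ Tendsto f atBot atBot := by
  have hq0 : q ≠ 0 := fun h => hq 0 (by simp [h])
  have hp0 : p ≠ 0 := by
    intro h
    have h01 : f 0 < f 1 := hmono (by norm_num)
    rw [hf 0, hf 1, h] at h01
    simp at h01
  have hfneg : ∀ x : ℝ, f (-x) = (p.comp (-X)).eval x / (q.comp (-X)).eval x := by
    intro x
    simp [hf, eval_comp]
  -- strict monotonicity rules out tendsto atBot at atTop (and symmetric facts)
  have not_bot_top : ¬ Tendsto f atTop atBot := by
    intro h
    obtain ⟨x, hx1, hx2⟩ := ((h.eventually (eventually_lt_atBot (f 0))).and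
      (eventually_ge_atTop (0 : ℝ))).exists
    exact absurd (hmono.monotone hx2) (not_le.mpr hx1)
  have not_negtop : ¬ Tendsto (fun x => f (-x)) atTop atTop := by
    intro h
    obtain ⟨x, hx1, hx2⟩ := ((h.eventually (eventually_gt_atTop (f 0))).and
      (eventually_ge_atTop (0 : ℝ))).exists
    have : f (-x) ≤ f 0 := hmono.monotone (by linarith)
    linarith
  rcases lt_trichotomy p.degree q.degree with hdeg | hdeg | hdeg
  · -- impossible: f tends to 0 at both ends
    exfalso
    have h1 : Tendsto f atTop (𝓝 0) := by
      have := div_tendsto_zero_of_degree_lt p q hdeg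
      refine this.congr fun x => (hf x).symm
    have h2 : Tendsto f atBot (𝓝 0) := by
      apply tendsto_atBot_of_neg
      have := div_tendsto_zero_of_degree_lt (p.comp (-X)) (q.comp (-X))
        (by rw [degree_comp_negX, degree_comp_negX]; exact hdeg)
      refine this.congr fun x => (hfneg x).symm
    have hle : f 1 ≤ 0 := hmono.monotone.ge_of_tendsto h1 1
    have hge : (0 : ℝ) ≤ f 0 := hmono.monotone.le_of_tendsto h2 0
    have : f 0 < f 1 := hmono (by norm_num)
    linarith
  · -- impossible: f tends to the same finite limit at both ends
    exfalso
    set L := p.leadingCoeff / q.leadingCoeff with hL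
    have h1 : Tendsto f atTop (𝓝 L) := by
      have := div_tendsto_leadingCoeff_div_of_degree_eq p q hdeg
      refine this.congr fun x => (hf x).symm
    have h2 : Tendsto f atBot (𝓝 L) := by
      apply tendsto_atBot_of_neg
      have heq : (p.comp (-X)).leadingCoeff / (q.comp (-X)).leadingCoeff = L := by
        rw [leadingCoeff_comp_negX, leadingCoeff_comp_negX,
          natDegree_eq_of_degree_eq hdeg, hL]
        have hne : ((-1 : ℝ)) ^ q.natDegree ≠ 0 := by
          apply pow_ne_zero; norm_num
        rw [mul_div_mul_right _ _ hne]
      have := div_tendsto_leadingCoeff_div_of_degree_eq (p.comp (-X)) (q.comp (-X))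
        (by rw [degree_comp_negX, degree_comp_negX]; exact hdeg)
      rw [heq] at this
      refine this.congr fun x => (hfneg x).symm
    have hle : f 1 ≤ L := hmono.monotone.ge_of_tendsto h1 1
    have hge : L ≤ f 0 := hmono.monotone.le_of_tendsto h2 0
    have : f 0 < f 1 := hmono (by norm_num)
    linarith
  · -- main case: degree q < degree p
    constructor
    · rcases le_or_gt 0 (p.leadingCoeff / q.leadingCoeff) with hs | hs
      · have := div_tendsto_atTop_of_degree_gt p q hdeg hq0 hs
        refine this.congr fun x => (hf x).symm
      · exfalso
        apply not_bot_top
        have := div_tendsto_atBot_of_degree_gt p q hdeg hq0 hs.le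
        refine this.congr fun x => (hf x).symm
    · apply tendsto_atBot_of_neg
      have hdeg' : (q.comp (-X)).degree < (p.comp (-X)).degree := by
        rw [degree_comp_negX, degree_comp_negX]; exact hdeg
      rcases le_or_gt ((p.comp (-X)).leadingCoeff / (q.comp (-X)).leadingCoeff) 0 with hs | hs
      · have := div_tendsto_atBot_of_degree_gt (p.comp (-X)) (q.comp (-X)) hdeg'
          (comp_negX_ne_zero hq0) hs
        refine this.congr fun x => (hfneg x).symm
      · exfalso
        apply not_negtop
        have := div_tendsto_atTop_of_degree_gt (p.comp (-X)) (q.comp (-X)) hdeg'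
          (comp_negX_ne_zero hq0) hs.le
        refine this.congr fun x => (hfneg x).symm

theorem rational_nonsingular_bijective_dim_one (p q : Polynomial ℝ)
    (hq : ∀ x : ℝ, q.eval x ≠ 0) (f : ℝ → ℝ) (hf : ∀ x, f x = p.eval x / q.eval x)
    (hder : ∀ x : ℝ, deriv f x ≠ 0) :
    Function.Bijective f := by
  have hfe : f = fun x => p.eval x / q.eval x := funext hf
  have hcont : Continuous f := by
    rw [hfe]; exact p.continuous.div q.continuous hq
  -- explicit derivative
  have hD : ∀ x : ℝ, HasDerivAt f
      ((p.derivative.eval x * q.eval x - p.eval x * q.derivative.eval x) / q.eval x ^ 2) x := by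
    intro x
    rw [hfe]
    exact (p.hasDerivAt x).div (q.hasDerivAt x) (hq x)
  have hDeq : ∀ x : ℝ, deriv f x =
      (p.derivative * q - p * q.derivative).eval x / q.eval x ^ 2 := by
    intro x
    rw [(hD x).deriv]
    simp
  set r : Polynomial ℝ := p.derivative * q - p * q.derivative with hr
  have hrne : ∀ x : ℝ, r.eval x ≠ 0 := by
    intro x hx
    apply hder x
    rw [hDeq x, hx, zero_div]
  -- r has constant sign by IVT
  have hsign : (∀ x : ℝ, 0 < r.eval x) ∨ (∀ x : ℝ, r.eval x < 0) := by
    have key : ∀ a b : ℝ, r.eval a < 0 → 0 < r.eval b → False := by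
      intro a b ha hb
      have hmem : (0 : ℝ) ∈ Set.uIcc (r.eval a) (r.eval b) :=
        Set.mem_uIcc.mpr (Or.inl ⟨ha.le, hb.le⟩)
      obtain ⟨c, _, hc⟩ := intermediate_value_uIcc r.continuous.continuousOn hmem
      exact hrne c hc
    rcases (hrne 0).lt_or_gt with h0 | h0
    · right
      intro x
      rcases (hrne x).lt_or_gt with hx | hx
      · exact hx
      · exact absurd (key 0 x h0 hx) not_false
    · left
      intro x
      rcases (hrne x).lt_or_gt with hx | hx
      · exact absurd (key x 0 hx h0) not_false
      · exact hx
  have hq2 : ∀ x : ℝ, (0 : ℝ) < q.eval x ^ 2 := by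
    intro x
    have := hq x
    positivity
  rcases hsign with hpos | hneg
  · have hmono : StrictMono f := by
      apply strictMono_of_deriv_pos
      intro x
      rw [hDeq x]
      exact div_pos (hpos x) (hq2 x)
    obtain ⟨htop, hbot⟩ := aux_tendsto p q hq f hf hmono
    exact ⟨hmono.injective, hcont.surjective htop hbot⟩
  · have hanti : StrictAnti f := by
      apply strictAnti_of_deriv_neg
      intro x
      rw [hDeq x]
      exact div_neg_of_neg_of_pos (hneg x) (hq2 x)
    have hmono : StrictMono (fun x => -f x) := fun a b h => neg_lt_neg (hanti h)
    have hf' : ∀ x, -f x = (-p).eval x / q.eval x := by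
      intro x; rw [hf]; simp [neg_div]
    obtain ⟨htop, hbot⟩ := aux_tendsto (-p) q hq (fun x => -f x) hf' hmono
    have htop' : Tendsto f atTop atBot := by
      have := tendsto_neg_atTop_atBot.comp htop
      simpa [Function.comp_def] using this
    have hbot' : Tendsto f atBot atTop := by
      have := tendsto_neg_atBot_atTop.comp hbot
      simpa [Function.comp_def] using this
    exact ⟨hanti.injective, hcont.surjective' hbot' htop'⟩
end

section
/- Let X be a Hausdorff, locally compact space and let F : X → Y be a continuous open map which is a local homeomorphism with all fibers finite, and suppose the number of preimages of y is locally constant at a point y₀ of Y. Then F is proper at y₀: there is an open neighborhood U of y₀ such that every compact subset of U has compact preimage. -/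
theorem proper_at_of_locally_constant_fiber_count {X Y : Type*} [TopologicalSpace X]
    [TopologicalSpace Y] [T2Space X] [LocallyCompactSpace X]
    (F : X → Y) (hloc : IsLocalHomeomorph F) (hfib : ∀ y : Y, (F ⁻¹' {y}).Finite)
    (y₀ : Y) (U : Set Y) (hU : IsOpen U) (hy₀ : y₀ ∈ U) (k : ℕ)
    (hk : ∀ y ∈ U, Nat.card (F ⁻¹' {y}) = k) :
    ∃ V : Set Y, IsOpen V ∧ y₀ ∈ V ∧
      ∀ K ⊆ V, IsCompact K → IsCompact (F ⁻¹' K) := by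
  classical
  have hfin : (F ⁻¹' {y₀}).Finite := hfib y₀
  obtain ⟨A, hA, hAdisj⟩ := hfin.t2_separation
  choose e hxe hFe using hloc
  set W : X → Set X := fun x => A x ∩ (e x).source with hW
  have hWopen : ∀ x, IsOpen (W x) := fun x => (hA x).2.inter (e x).open_source
  have hWmem : ∀ x, x ∈ W x := fun x => ⟨(hA x).1, hxe x⟩
  have hWsrc : ∀ x, W x ⊆ (e x).source := fun x => Set.inter_subset_right
  have hFopen : IsOpenMap F := by
    apply IsLocalHomeomorph.isOpenMap
    intro x; exact ⟨e x, hxe x, hFe x⟩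
  set V : Set Y := U ∩ ⋂ x ∈ F ⁻¹' {y₀}, F '' (W x) with hV
  have hVopen : IsOpen V :=
    hU.inter (hfin.isOpen_biInter fun x _ => hFopen _ (hWopen x))
  have hy₀V : y₀ ∈ V := by
    refine ⟨hy₀, Set.mem_biInter fun x hx => ⟨x, hWmem x, hx⟩⟩
  -- key: any preimage of a point of V lies in some W x, x ∈ fiber of y₀
  have hkey : ∀ x' : X, F x' ∈ V → ∃ x ∈ F ⁻¹' {y₀}, x' ∈ W x := by
    intro x' hx'
    set y := F x' with hy
    have hyU : y ∈ U := hx'.1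
    have hsheet : ∀ x : F ⁻¹' {y₀}, ∃ z ∈ W x.1, F z = y := by
      rintro ⟨x, hx⟩
      have := Set.mem_iInter₂.mp hx'.2 x hx
      obtain ⟨z, hz, hzF⟩ := this
      exact ⟨z, hz, hzF⟩
    choose z hzW hzF using hsheet
    haveI : Finite (F ⁻¹' {y₀} : Set X) := hfin.to_subtype
    haveI : Finite (F ⁻¹' {y} : Set X) := (hfib y).to_subtype
    set g : (F ⁻¹' {y₀} : Set X) → (F ⁻¹' {y} : Set X) := fun x => ⟨z x, hzF x⟩ with hg
    have hginj : Function.Injective g := by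
      intro a b hab
      have hz' : z a = z b := congrArg Subtype.val hab
      by_contra hne
      have hne' : (a : X) ≠ (b : X) := fun h => hne (Subtype.ext h)
      have := hAdisj a.2 b.2 hne'
      exact (this.le_bot ⟨(hzW a).1, hz' ▸ (hzW b).1⟩ : (z a : X) ∈ (⊥ : Set X))
    have hgbij : Function.Bijective g :=
      (Nat.bijective_iff_injective_and_card g).mpr
        ⟨hginj, by rw [hk y₀ hy₀, hk y hyU]⟩
    obtain ⟨x, hx⟩ := hgbij.2 ⟨x', rfl⟩
    refine ⟨x.1, x.2, ?_⟩
    have : z x = x' := congrArg Subtype.val hx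
    exact this ▸ hzW x
  refine ⟨V, hVopen, hy₀V, ?_⟩
  intro K hKV hK
  have hKW : ∀ x ∈ F ⁻¹' {y₀}, K ⊆ F '' (W x) := by
    intro x hx
    exact fun y hy => Set.mem_iInter₂.mp (hKV hy).2 x hx
  have heq : F ⁻¹' K = ⋃ x ∈ F ⁻¹' {y₀}, (e x).symm '' K := by
    ext x'
    constructor
    · intro hx'
      obtain ⟨x, hx, hx'W⟩ := hkey x' (hKV hx')
      refine Set.mem_biUnion hx ?_
      refine ⟨F x', hx', ?_⟩
      have : F x' = e x x' := congrFun (hFe x) x'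
      rw [this, (e x).left_inv (hWsrc x hx'W)]
    · intro hx'
      obtain ⟨x, hx, y, hyK, hyx'⟩ := Set.mem_iUnion₂.mp hx'
      obtain ⟨w, hwW, hwF⟩ := hKW x hx hyK
      have hyeq : y = e x w := hwF ▸ congrFun (hFe x) w
      have : x' = w := by rw [← hyx', hyeq, (e x).left_inv (hWsrc x hwW)]
      subst this
      exact Set.mem_preimage.mpr (hwF ▸ hyK)
  rw [heq]
  refine hfin.isCompact_biUnion fun x hx => ?_
  refine hK.image_of_continuousOn ((e x).continuousOn_symm.mono ?_)
  intro y hy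
  obtain ⟨w, hwW, hwF⟩ := hKW x hx hy
  rw [← hwF]
  have : F w = e x w := congrFun (hFe x) w
  rw [this]
  exact (e x).map_source (hWsrc x hwW)
end

section
/- The Gale–Nikaido example: the map F(x,y) = (e^x − y² + 3, 4y·e^x − y³) from ℝ² to ℝ² has Jacobian matrix whose leading principal minors (e^x and the full determinant e^x(4e^x + 5y²)) vanish nowhere, yet F(0,2) = F(0,−2), so F is not injective. -/
/-! On the line `x = 0` the map is `(4 - y²) • (1, y)`, which vanishes at `y = ±2`. The leading
principal minors of the Jacobian are positive, but the other principal minor `4 eˣ - 3 y²` is not,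
so the Jacobian is not a P-matrix and the Gale–Nikaido univalence theorem does not apply. -/

open Real Function

noncomputable def galeNikaido (p : ℝ × ℝ) : ℝ × ℝ :=
  (exp p.1 - p.2 ^ 2 + 3, 4 * p.2 * exp p.1 - p.2 ^ 3)

theorem galeNikaido_zero_two_eq_zero_neg_two : galeNikaido (0, 2) = galeNikaido (0, -2) := by
  norm_num [galeNikaido]

theorem not_injective_galeNikaido : ¬Injective galeNikaido := fun h => by
  have := h galeNikaido_zero_two_eq_zero_neg_two
  norm_num at this

theorem galeNikaido_jacobian_det (x y : ℝ) :
    deriv (fun s => exp s - y ^ 2 + 3) x * deriv (fun s => 4 * s * exp x - s ^ 3) y -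
        deriv (fun s => exp x - s ^ 2 + 3) y * deriv (fun s => 4 * y * exp s - y ^ 3) x =
      exp x * (4 * exp x + 5 * y ^ 2) := by
  have h₁₁ : deriv (fun s => exp s - y ^ 2 + 3) x = exp x :=
    (((hasDerivAt_exp x).sub_const _).add_const _).deriv
  have h₁₂ : deriv (fun s => 4 * s * exp x - s ^ 3) y = 4 * exp x - 3 * y ^ 2 := by
    simpa using (((hasDerivAt_id' y).const_mul 4).mul_const (exp x)).fun_sub
      (hasDerivAt_pow 3 y) |>.deriv
  have h₂₁ : deriv (fun s => exp x - s ^ 2 + 3) y = -(2 * y) := by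
    simp [(((hasDerivAt_pow 2 y).const_sub (exp x)).add_const 3).deriv]
  have h₂₂ : deriv (fun s => 4 * y * exp s - y ^ 3) x = 4 * y * exp x :=
    (((hasDerivAt_exp x).const_mul (4 * y)).sub_const _).deriv
  rw [h₁₁, h₁₂, h₂₁, h₂₂]
  ring

theorem galeNikaido_jacobian_det_pos (x y : ℝ) : 0 < exp x * (4 * exp x + 5 * y ^ 2) := by
  positivity

theorem gale_nikaido_example (F : ℝ × ℝ → ℝ × ℝ)
    (hF : ∀ p : ℝ × ℝ, F p = (Real.exp p.1 - p.2 ^ 2 + 3,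
      4 * p.2 * Real.exp p.1 - p.2 ^ 3)) :
    F (0, 2) = F (0, -2) ∧ ¬Function.Injective F ∧
      (∀ x y : ℝ,
        deriv (fun s => Real.exp s - y ^ 2 + 3) x *
            deriv (fun s => 4 * s * Real.exp x - s ^ 3) y -
          deriv (fun s => Real.exp x - s ^ 2 + 3) y *
            deriv (fun s => 4 * y * Real.exp s - y ^ 3) x =
          Real.exp x * (4 * Real.exp x + 5 * y ^ 2)) ∧
      (∀ x y : ℝ, 0 < Real.exp x * (4 * Real.exp x + 5 * y ^ 2)) ∧
      (∀ x : ℝ, 0 < Real.exp x) := by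
  obtain rfl : F = galeNikaido := funext hF
  exact ⟨galeNikaido_zero_two_eq_zero_neg_two, not_injective_galeNikaido,
    galeNikaido_jacobian_det, galeNikaido_jacobian_det_pos, exp_pos⟩
end

section
/- The map F = (x²y⁶ + 2xy², xy³ + 1/y), defined on the open set {(x,y) : y ≠ 0} ⊆ ℝ², has Jacobian determinant equal to a nonzero constant yet is not injective: F(1,1) = F(−3,−1). -/
namespace Keller

variable {𝕜 : Type*} [NontriviallyNormedField 𝕜]

theorem hasDerivAt_fst_wrt_fst (x y : 𝕜) :
    HasDerivAt (fun s => s ^ 2 * y ^ 6 + 2 * s * y ^ 2) (2 * x * y ^ 6 + 2 * y ^ 2) x := by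
  refine (((hasDerivAt_pow 2 x).mul_const (y ^ 6)).add
    (((hasDerivAt_id x).const_mul 2).mul_const (y ^ 2))).congr_deriv ?_
  simp only [Nat.cast_ofNat]
  ring

theorem hasDerivAt_fst_wrt_snd (x y : 𝕜) :
    HasDerivAt (fun s => x ^ 2 * s ^ 6 + 2 * x * s ^ 2) (6 * x ^ 2 * y ^ 5 + 4 * x * y) y := by
  refine (((hasDerivAt_pow 6 y).const_mul (x ^ 2)).add
    ((hasDerivAt_pow 2 y).const_mul (2 * x))).congr_deriv ?_
  simp only [Nat.cast_ofNat]
  ring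

theorem hasDerivAt_snd_wrt_fst (x y : 𝕜) :
    HasDerivAt (fun s => s * y ^ 3 + 1 / y) (y ^ 3) x := by
  simpa using ((hasDerivAt_id x).mul_const (y ^ 3)).add_const (1 / y)

theorem hasDerivAt_snd_wrt_snd (x : 𝕜) {y : 𝕜} (hy : y ≠ 0) :
    HasDerivAt (fun s => x * s ^ 3 + 1 / s) (3 * x * y ^ 2 - 1 / y ^ 2) y := by
  simp only [one_div]
  refine (((hasDerivAt_pow 3 y).const_mul x).add (hasDerivAt_inv hy)).congr_deriv ?_
  simp only [Nat.cast_ofNat]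
  ring

/-- Expanding, the `x²y⁸` and `xy⁴` terms cancel and only `-2` survives. -/
theorem jacobian_det_eq (x : 𝕜) {y : 𝕜} (hy : y ≠ 0) :
    (2 * x * y ^ 6 + 2 * y ^ 2) * (3 * x * y ^ 2 - 1 / y ^ 2) -
      (6 * x ^ 2 * y ^ 5 + 4 * x * y) * y ^ 3 = -2 := by
  field_simp
  ring

end Keller

open Keller in
theorem keller_rational_not_injective (F : ℝ × ℝ → ℝ × ℝ)
    (hF : ∀ p : ℝ × ℝ, F p = (p.1 ^ 2 * p.2 ^ 6 + 2 * p.1 * p.2 ^ 2,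
      p.1 * p.2 ^ 3 + 1 / p.2)) :
    F (1, 1) = (3, 2) ∧ F (-3, -1) = (3, 2) ∧
      ∀ x y : ℝ, y ≠ 0 →
        deriv (fun s => s ^ 2 * y ^ 6 + 2 * s * y ^ 2) x *
            deriv (fun s => x * s ^ 3 + 1 / s) y -
          deriv (fun s => x ^ 2 * s ^ 6 + 2 * x * s ^ 2) y *
            deriv (fun s => s * y ^ 3 + 1 / y) x = -2 := by
  refine ⟨by rw [hF]; norm_num, by rw [hF]; norm_num, fun x y hy => ?_⟩
  rw [(hasDerivAt_fst_wrt_fst x y).deriv, (hasDerivAt_snd_wrt_snd x hy).deriv,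
    (hasDerivAt_fst_wrt_snd x y).deriv, (hasDerivAt_snd_wrt_fst x y).deriv]
  exact jacobian_det_eq x hy
end
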